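/- Logarithmic sum bound for Adam second moments: let v_t = β₂ v_{t-1} + (1-β₂) m_t² with v_0 > 0 coordinatewise and 0 < β₂ < 1. Then for each coordinate i, Σ_{t=0}^{T-1} (1-β₂) m_{t,i}² / (v_{t,i} + ζ) ≤ ln(v_{T,i}/v_{0,i}) - T ln β₂ for any ζ ≥ 0. -/

import Mathlib

/-! Since `v_{t+1} - β₂ v_t = (1-β₂) m_{t+1}² ≥ 0`, the inequality `1 - 1/x ≤ log x` at
`x = v_{t+1}/(β₂ v_t)` bounds the `t`-th summand by `log (v_{t+1}/(β₂ v_t))`, and these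
bounds telescope. -/

open Real Finset

lemma pos_of_eq_mul_add {β : ℝ} {v c : ℕ → ℝ} (hβ : 0 < β) (hc : ∀ t, 0 ≤ c t)
    (hv0 : 0 < v 0) (hrec : ∀ t, v (t + 1) = β * v t + c t) : ∀ t, 0 < v t
  | 0 => hv0
  | t + 1 => by
    rw [hrec t]
    have := pos_of_eq_mul_add hβ hc hv0 hrec t
    have := hc t
    positivity

lemma sub_div_add_le_log_div {a b ζ : ℝ} (ha : 0 < a) (hab : a ≤ b) (hζ : 0 ≤ ζ) :
    (b - a) / (b + ζ) ≤ log (b / a) := by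
  have hb : 0 < b := ha.trans_le hab
  calc (b - a) / (b + ζ) ≤ (b - a) / b :=
        div_le_div_of_nonneg_left (sub_nonneg.2 hab) hb (le_add_of_nonneg_right hζ)
    _ = 1 - (b / a)⁻¹ := by field_simp
    _ ≤ log (b / a) := one_sub_inv_le_log_of_pos (div_pos hb ha)

lemma sum_range_log_div_mul_eq {β : ℝ} {v : ℕ → ℝ} (hβ : 0 < β) (hv : ∀ t, 0 < v t)
    (T : ℕ) :
    ∑ t ∈ range T, log (v (t + 1) / (β * v t)) = log (v T / v 0) - T * log β := by
  have hterm : ∀ t, log (v (t + 1) / (β * v t)) = (log (v (t + 1)) - log (v t)) - log β :=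
    fun t => by
      rw [log_div (hv _).ne' (mul_pos hβ (hv t)).ne', log_mul hβ.ne' (hv t).ne']
      ring
  simp only [hterm, sum_sub_distrib, sum_range_sub (fun t => log (v t)), sum_const, card_range,
    nsmul_eq_mul, log_div (hv T).ne' (hv 0).ne']

/-- Logarithmic sum bound for Adam second moments: if
`v_{t+1} = β₂ v_t + (1-β₂) m_{t+1}²` with `v_0 > 0` and `0 < β₂ < 1`, then for any
`ζ ≥ 0`, `∑_{t=0}^{T-1} (1-β₂) m_{t+1}²/(v_{t+1}+ζ) ≤ ln(v_T/v_0) - T ln β₂`. -/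
theorem adam_log_sum_bound (β₂ ζ : ℝ) (h0 : 0 < β₂) (h1 : β₂ < 1) (hζ : 0 ≤ ζ)
    (m v : ℕ → ℝ) (hv0 : 0 < v 0)
    (hrec : ∀ t : ℕ, v (t + 1) = β₂ * v t + (1 - β₂) * (m (t + 1)) ^ 2) (T : ℕ) :
    ∑ t ∈ Finset.range T, (1 - β₂) * (m (t + 1)) ^ 2 / (v (t + 1) + ζ)
      ≤ Real.log (v T / v 0) - T * Real.log β₂ := by
  have hinc : ∀ t, 0 ≤ (1 - β₂) * (m (t + 1)) ^ 2 := fun t =>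
    mul_nonneg (sub_nonneg.2 h1.le) (sq_nonneg _)
  have hv := pos_of_eq_mul_add h0 hinc hv0 hrec
  rw [← sum_range_log_div_mul_eq h0 hv T]
  refine sum_le_sum fun t _ => ?_
  have hstep : (1 - β₂) * (m (t + 1)) ^ 2 = v (t + 1) - β₂ * v t := by rw [hrec t]; ring
  rw [hstep]
  exact sub_div_add_le_log_div (mul_pos h0 (hv t)) (by linarith [hrec t, hinc t]) hζ
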